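/- Assume in addition that g is locally Hölder continuous of some order β ∈ (0, H). Define L_t := X_t − X₀ − a∫₀^t s^{2H−1}/X_s ds + b∫₀^t X_s ds − σ g(t) for t ≥ 0 (all integrals Lebesgue integrals). Then L_t ≥ 0 for every t ≥ 0; equivalently, there is a nonnegative function L with X_t = X₀ + a∫₀^t s^{2H−1}/X_s ds − b∫₀^t X_s ds + σ g(t) + L_t for all t ≥ 0. -/

import Mathlib

/-!
The approximations decrease in `ε` by a last-exit argument: after the last time before `r` at
which `X^ε' ≤ X^ε`, the drift of `X^ε'` is the smaller one, so `X^ε' - X^ε` cannot grow there.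
The same argument against the level `max X₀ 1`, above which the drift is at most `s^{2H-1}`,
bounds `X^ε` from above uniformly in `ε`; with `X^1 ≤ X^ε` for `ε ≤ 1`, dominated convergence
gives `∫₀ᵗ X^ε → ∫₀ᵗ X`. By the equation, `a ∫₀ᵗ drift_ε` then converges to
`X_t - X₀ + b ∫₀ᵗ X - σ g(t)`, and Fatou's lemma bounds `a ∫₀ᵗ s^{2H-1} / X_s` by this limit,
since the drifts converge to `s^{2H-1} / X_s` wherever `X_s > 0`.
-/

open MeasureTheory Filter Set

/-- `X` is a continuous solution on `[0,T]` of the ε-approximating equation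
`X_t = X₀ + a ∫₀ᵗ (s+ε)^{2H-1} / (X_s 1_{X_s>0} + ε) ds − b ∫₀ᵗ X_s ds + σ g(t)`. -/
def approxSol (X₀ a b σ H : ℝ) (g : ℝ → ℝ) (T ε : ℝ) (X : ℝ → ℝ) : Prop :=
  ContinuousOn X (Set.Icc 0 T) ∧
    ∀ t ∈ Set.Icc (0:ℝ) T,
      X t = X₀ + a * (∫ s in (0:ℝ)..t,
            (s + ε) ^ (2 * H - 1) / ((if 0 < X s then X s else 0) + ε))
          - b * (∫ s in (0:ℝ)..t, X s) + σ * g t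

open Topology

theorem le_add_of_forall_exit {f : ℝ → ℝ} {a r K C : ℝ} (hr : a ≤ r)
    (hf : ContinuousOn f (Icc a r)) (ha : f a ≤ K) (hC : 0 ≤ C)
    (hexit : ∀ τ ∈ Ico a r, (∀ s ∈ Ioo τ r, K < f s) → f r ≤ f τ + C) :
    f r ≤ K + C := by
  by_contra! hfr
  -- `sSup S` is the last time before `r` at which `f ≤ K`.
  set S := Icc a r ∩ f ⁻¹' Iic K
  have hSbdd : BddAbove S := ⟨r, fun s hs => hs.1.2⟩
  have hτ : sSup S ∈ S := (hf.preimage_isClosed_of_isClosed isClosed_Icc isClosed_Iic).csSup_mem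
    ⟨a, left_mem_Icc.2 hr, ha⟩ hSbdd
  have hτr : sSup S < r :=
    hτ.1.2.lt_of_ne fun h => by linarith [show f r ≤ K from h ▸ hτ.2]
  have hlast : ∀ s ∈ Ioo (sSup S) r, K < f s := fun s hs => by
    by_contra! hsK
    exact (le_csSup hSbdd ⟨⟨hτ.1.1.trans hs.1.le, hs.2.le⟩, hsK⟩).not_gt hs.1
  have hτK : f (sSup S) ≤ K := hτ.2
  linarith [hexit _ ⟨hτ.1.1, hτr⟩ hlast]

theorem integral_le_of_tendsto_integral_of_le_liminf {α : Type*} [MeasurableSpace α]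
    {μ : Measure α} {f : α → ℝ} {F : ℕ → α → ℝ} {I : ℝ}
    (hF : ∀ n, Integrable (F n) μ) (hF_nonneg : ∀ n, 0 ≤ᵐ[μ] F n)
    (hFI : Tendsto (fun n => ∫ x, F n x ∂μ) atTop (𝓝 I))
    (hf : ∀ᵐ x ∂μ, ENNReal.ofReal (f x) ≤ liminf (fun n => ENNReal.ofReal (F n x)) atTop) :
    ∫ x, f x ∂μ ≤ I := by
  have hI : 0 ≤ I := ge_of_tendsto' hFI fun n => integral_nonneg_of_ae (hF_nonneg n)
  by_cases hfi : Integrable f μ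
  swap
  · rwa [integral_undef hfi]
  have hlint : ∫⁻ x, ENNReal.ofReal (f x) ∂μ ≤ ENNReal.ofReal I := calc
    _ ≤ ∫⁻ x, liminf (fun n => ENNReal.ofReal (F n x)) atTop ∂μ := lintegral_mono_ae hf
    _ ≤ liminf (fun n => ∫⁻ x, ENNReal.ofReal (F n x) ∂μ) atTop :=
      lintegral_liminf_le' fun n => (hF n).aemeasurable.ennreal_ofReal
    _ = liminf (fun n => ENNReal.ofReal (∫ x, F n x ∂μ)) atTop := by
      simp_rw [ofReal_integral_eq_lintegral_ofReal (hF _) (hF_nonneg _)]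
    _ = ENNReal.ofReal I := (ENNReal.tendsto_ofReal hFI).liminf_eq
  calc ∫ x, f x ∂μ ≤ ∫ x, max (f x) 0 ∂μ :=
        integral_mono hfi hfi.pos_part fun x => le_max_left _ _
    _ = (∫⁻ x, ENNReal.ofReal (f x) ∂μ).toReal := by
        rw [integral_eq_lintegral_of_nonneg_ae (f := fun x => max (f x) 0)
          (Eventually.of_forall fun x => le_max_right _ _)
          hfi.pos_part.aestronglyMeasurable]
        simp
    _ ≤ I := ENNReal.toReal_le_of_le_ofReal hI hlint

noncomputable def drift (H ε : ℝ) (Y : ℝ → ℝ) (s : ℝ) : ℝ :=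
  (s + ε) ^ (2 * H - 1) / (max (Y s) 0 + ε)

section drift

variable {H ε s : ℝ} {Y : ℝ → ℝ}

theorem drift_nonneg (hs : 0 ≤ s) (hε : 0 < ε) : 0 ≤ drift H ε Y s :=
  div_nonneg (Real.rpow_nonneg (by linarith) _) (by positivity)

theorem drift_le_drift {ε' : ℝ} {Y' : ℝ → ℝ} (hH : H ≤ 1 / 2) (hs : 0 ≤ s) (hε : 0 < ε)
    (hεε' : ε ≤ ε') (hY : Y s ≤ Y' s) : drift H ε' Y' s ≤ drift H ε Y s :=
  div_le_div₀ (Real.rpow_nonneg (by linarith) _)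
    (Real.rpow_le_rpow_of_nonpos (by linarith) (by linarith) (by linarith)) (by positivity)
    (add_le_add (max_le_max_right 0 hY) hεε')

theorem drift_le_rpow (hH : H ≤ 1 / 2) (hs : 0 < s) (hε : 0 < ε) (hY : 1 ≤ Y s) :
    drift H ε Y s ≤ s ^ (2 * H - 1) := calc
  drift H ε Y s ≤ (s + ε) ^ (2 * H - 1) :=
    div_le_self (Real.rpow_nonneg (by linarith) _) (by linarith [le_max_left (Y s) 0])
  _ ≤ s ^ (2 * H - 1) := Real.rpow_le_rpow_of_nonpos hs (by linarith) (by linarith)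

theorem continuousOn_drift {S : Set ℝ} (hY : ContinuousOn Y S) (hS : S ⊆ Ici 0) (hε : 0 < ε) :
    ContinuousOn (drift H ε Y) S := by
  refine ContinuousOn.div ?_
    (((continuous_id.max continuous_const).comp_continuousOn hY).add continuousOn_const)
    fun x _ => by positivity
  exact ContinuousOn.rpow_const (f := fun x => x + ε) (by fun_prop) fun x hx =>
    Or.inl (by linarith [(hS hx).out] : 0 < x + ε).ne'

theorem tendsto_drift {ι : Type*} {l : Filter ι} {εi : ι → ℝ} {Yi : ι → ℝ → ℝ} {y : ℝ}
    (hε : Tendsto εi l (𝓝 0)) (hY : Tendsto (fun i => Yi i s) l (𝓝 y)) (hs : 0 < s)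
    (hy : 0 < y) : Tendsto (fun i => drift H (εi i) (Yi i) s) l (𝓝 (s ^ (2 * H - 1) / y)) := by
  have hnum : Tendsto (fun i => (s + εi i) ^ (2 * H - 1)) l (𝓝 (s ^ (2 * H - 1))) := by
    have := (tendsto_const_nhds (x := s)).add hε
    rw [add_zero] at this
    exact (Real.continuousAt_rpow_const s _ (Or.inl hs.ne')).tendsto.comp this
  have hden : Tendsto (fun i => max (Yi i s) 0 + εi i) l (𝓝 y) := by
    have := (hY.max (tendsto_const_nhds (x := (0 : ℝ)))).add hε
    rwa [max_eq_left hy.le, add_zero] at this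
  exact hnum.div hden hy.ne'

end drift

namespace approxSol

variable {X₀ a b σ H T ε : ℝ} {g Y : ℝ → ℝ}

theorem eq_drift (h : approxSol X₀ a b σ H g T ε Y) {t : ℝ} (ht : t ∈ Icc 0 T) :
    Y t = X₀ + a * (∫ s in (0)..t, drift H ε Y s) - b * (∫ s in (0)..t, Y s) + σ * g t := by
  have hmax (x : ℝ) : (if 0 < x then x else 0) = max x 0 := by
    split_ifs with hx
    exacts [(max_eq_left hx.le).symm, (max_eq_right (not_lt.1 hx)).symm]
  simpa only [drift, hmax] using h.2 t ht

theorem apply_zero (h : approxSol X₀ a b σ H g T ε Y) (hg0 : g 0 = 0) (hT : 0 ≤ T) :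
    Y 0 = X₀ := by
  simpa [hg0] using h.eq_drift (left_mem_Icc.2 hT)

theorem sub_eq_integral (h : approxSol X₀ a b σ H g T ε Y) (hε : 0 < ε) {τ r : ℝ}
    (hτ : τ ∈ Icc 0 T) (hr : r ∈ Icc 0 T) :
    Y r - Y τ = a * (∫ s in τ..r, drift H ε Y s) - b * (∫ s in τ..r, Y s)
      + (σ * g r - σ * g τ) := by
  have hint {F : ℝ → ℝ} (hF : ContinuousOn F (Icc 0 T)) {t : ℝ} (ht : t ∈ Icc 0 T) :
      IntervalIntegrable F volume 0 t :=
    (hF.mono (uIcc_subset_Icc (left_mem_Icc.2 (ht.1.trans ht.2)) ht)).intervalIntegrable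
  have hd := continuousOn_drift (H := H) h.1 Icc_subset_Ici_self hε
  rw [h.eq_drift hr, h.eq_drift hτ, ← intervalIntegral.integral_interval_sub_left (hint hd hr)
    (hint hd hτ), ← intervalIntegral.integral_interval_sub_left (hint h.1 hr) (hint h.1 hτ)]
  ring

theorem le_of_eps_le {ε' : ℝ} {Y' : ℝ → ℝ} (h : approxSol X₀ a b σ H g T ε Y)
    (h' : approxSol X₀ a b σ H g T ε' Y') (ha : 0 ≤ a) (hb : 0 ≤ b) (hH : H ≤ 1 / 2)
    (hg0 : g 0 = 0) (hε : 0 < ε) (hεε' : ε ≤ ε') {r : ℝ} (hr : r ∈ Icc 0 T) : Y' r ≤ Y r := by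
  have hε' : 0 < ε' := hε.trans_le hεε'
  have hT : 0 ≤ T := hr.1.trans hr.2
  have hsub : Icc 0 r ⊆ Icc 0 T := Icc_subset_Icc le_rfl hr.2
  suffices (Y' - Y) r ≤ 0 + 0 by simpa [sub_nonpos] using this
  refine le_add_of_forall_exit hr.1 ((h'.1.sub h.1).mono hsub)
    (by simp [h.apply_zero hg0 hT, h'.apply_zero hg0 hT]) le_rfl fun τ hτ hlast => ?_
  have hτT : τ ∈ Icc 0 T := ⟨hτ.1, hτ.2.le.trans hr.2⟩
  have hint {F : ℝ → ℝ} (hF : ContinuousOn F (Icc 0 T)) : IntervalIntegrable F volume τ r :=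
    (hF.mono (uIcc_subset_Icc hτT hr)).intervalIntegrable
  have hdrift : ∫ s in τ..r, drift H ε' Y' s ≤ ∫ s in τ..r, drift H ε Y s :=
    intervalIntegral.integral_mono_on_of_le_Ioo hτ.2.le
      (hint (continuousOn_drift h'.1 Icc_subset_Ici_self hε'))
      (hint (continuousOn_drift h.1 Icc_subset_Ici_self hε)) fun s hs =>
        drift_le_drift hH (hτ.1.trans hs.1.le) hε hεε' (sub_pos.1 (hlast s hs)).le
  have hY : ∫ s in τ..r, Y s ≤ ∫ s in τ..r, Y' s :=
    intervalIntegral.integral_mono_on_of_le_Ioo hτ.2.le (hint h.1) (hint h'.1) fun s hs =>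
      (sub_pos.1 (hlast s hs)).le
  have e := h.sub_eq_integral hε hτT hr
  have e' := h'.sub_eq_integral hε' hτT hr
  simp only [Pi.sub_apply, add_zero]
  linarith [mul_le_mul_of_nonneg_left hdrift ha, mul_le_mul_of_nonneg_left hY hb]

theorem apply_le {C : ℝ} (h : approxSol X₀ a b σ H g T ε Y) (ha : 0 ≤ a)
    (hb : 0 ≤ b) (hH0 : 0 < H) (hH : H ≤ 1 / 2) (hg0 : g 0 = 0) (hε : 0 < ε)
    (hC : ∀ s ∈ Icc 0 T, |σ * g s| ≤ C) {r : ℝ} (hr : r ∈ Icc 0 T) :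
    Y r ≤ max X₀ 1 + (a * (T ^ (2 * H) / (2 * H)) + 2 * C) := by
  have hT : 0 ≤ T := hr.1.trans hr.2
  have hC0 : 0 ≤ C := (abs_nonneg _).trans (hC 0 (left_mem_Icc.2 hT))
  have hrpow : ∫ s in (0)..T, s ^ (2 * H - 1) = T ^ (2 * H) / (2 * H) := by
    rw [integral_rpow (Or.inl (by linarith)), sub_add_cancel,
      Real.zero_rpow (mul_pos two_pos hH0).ne', sub_zero]
  refine le_add_of_forall_exit hr.1 (h.1.mono (Icc_subset_Icc le_rfl hr.2))
    (by simp [h.apply_zero hg0 hT]) (by positivity) fun τ hτ hlast => ?_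
  have hτT : τ ∈ Icc 0 T := ⟨hτ.1, hτ.2.le.trans hr.2⟩
  have hint {F : ℝ → ℝ} (hF : ContinuousOn F (Icc 0 T)) : IntervalIntegrable F volume τ r :=
    (hF.mono (uIcc_subset_Icc hτT hr)).intervalIntegrable
  have hdrift : ∫ s in τ..r, drift H ε Y s ≤ T ^ (2 * H) / (2 * H) := calc
    _ ≤ ∫ s in τ..r, s ^ (2 * H - 1) :=
      intervalIntegral.integral_mono_on_of_le_Ioo hτ.2.le
        (hint (continuousOn_drift h.1 Icc_subset_Ici_self hε))
        (intervalIntegral.intervalIntegrable_rpow' (by linarith)) fun s hs =>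
          drift_le_rpow hH (hτ.1.trans_lt hs.1) hε ((le_max_right _ _).trans (hlast s hs).le)
    _ ≤ ∫ s in (0)..T, s ^ (2 * H - 1) :=
      intervalIntegral.integral_mono_interval hτ.1 hτ.2.le hr.2
        (ae_restrict_of_forall_mem measurableSet_Ioc fun s hs => Real.rpow_nonneg hs.1.le _)
        (intervalIntegral.intervalIntegrable_rpow' (by linarith))
    _ = T ^ (2 * H) / (2 * H) := hrpow
  have hY : 0 ≤ ∫ s in τ..r, Y s := by
    simpa using intervalIntegral.integral_mono_on_of_le_Ioo hτ.2.le intervalIntegrable_const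
      (hint h.1) fun s hs => (zero_le_one.trans (le_max_right _ _)).trans (hlast s hs).le
  have hg : σ * g r - σ * g τ ≤ 2 * C := by
    linarith [(abs_le.1 (hC r hr)).2, (abs_le.1 (hC τ hτT)).1]
  linarith [h.sub_eq_integral hε hτT hr, mul_le_mul_of_nonneg_left hdrift ha, mul_nonneg hb hY]

end approxSol

section limit

variable {X₀ a b σ H T : ℝ} {g : ℝ → ℝ} {Xe : ℝ → ℝ → ℝ} {X : ℝ → ℝ}

theorem exists_abs_approxSol_le (hsol : ∀ ε > 0, approxSol X₀ a b σ H g T ε (Xe ε))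
    (ha : 0 ≤ a) (hb : 0 ≤ b) (hH0 : 0 < H) (hH : H ≤ 1 / 2) (hg0 : g 0 = 0)
    (hgc : ContinuousOn g (Icc 0 T)) :
    ∃ R, ∀ ε ∈ Ioc 0 1, ∀ s ∈ Icc 0 T, |Xe ε s| ≤ R := by
  obtain ⟨C, hC⟩ :=
    isCompact_Icc.exists_bound_of_continuousOn (continuousOn_const (c := σ).mul hgc)
  obtain ⟨M, hM⟩ := isCompact_Icc.exists_bound_of_continuousOn (hsol 1 one_pos).1
  refine ⟨max (max X₀ 1 + (a * (T ^ (2 * H) / (2 * H)) + 2 * C)) M,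
    fun ε hε s hs => abs_le.2 ⟨?_, ?_⟩⟩
  · have hlow : Xe 1 s ≤ Xe ε s :=
      (hsol ε hε.1).le_of_eps_le (hsol 1 one_pos) ha hb hH hg0 hε.1 hε.2 hs
    exact (neg_le_neg (le_max_right _ _)).trans ((abs_le.1 (hM s hs)).1.trans hlow)
  · exact ((hsol ε hε.1).apply_le ha hb hH0 hH hg0 hε.1 hC hs).trans (le_max_left _ _)

theorem tendsto_integral_of_approxSol (hsol : ∀ ε > 0, approxSol X₀ a b σ H g T ε (Xe ε))
    (hX : ∀ s ∈ Icc 0 T, Tendsto (fun ε => Xe ε s) (𝓝[>] 0) (𝓝 (X s)))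
    (ha : 0 ≤ a) (hb : 0 ≤ b) (hH0 : 0 < H) (hH : H ≤ 1 / 2) (hg0 : g 0 = 0)
    (hgc : ContinuousOn g (Icc 0 T)) {t : ℝ} (ht : t ∈ Icc 0 T) :
    Tendsto (fun ε => ∫ s in (0)..t, Xe ε s) (𝓝[>] 0) (𝓝 (∫ s in (0)..t, X s)) := by
  obtain ⟨R, hR⟩ := exists_abs_approxSol_le hsol ha hb hH0 hH hg0 hgc
  have hsub : uIoc 0 t ⊆ Icc 0 T := by
    rw [uIoc_of_le ht.1]
    exact Ioc_subset_Icc_self.trans (Icc_subset_Icc le_rfl ht.2)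
  refine intervalIntegral.tendsto_integral_filter_of_dominated_convergence (fun _ => R) ?_ ?_
    intervalIntegrable_const (Eventually.of_forall fun s hs => hX s (hsub hs))
  · filter_upwards [self_mem_nhdsWithin] with ε hε
    exact ((hsol ε hε).1.mono hsub).aestronglyMeasurable measurableSet_uIoc
  · filter_upwards [Ioc_mem_nhdsGT one_pos] with ε hε
    exact Eventually.of_forall fun s hs => hR ε hε s (hsub hs)

theorem tendsto_integral_drift (hsol : ∀ ε > 0, approxSol X₀ a b σ H g T ε (Xe ε))
    (hX : ∀ s ∈ Icc 0 T, Tendsto (fun ε => Xe ε s) (𝓝[>] 0) (𝓝 (X s)))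
    (ha : 0 < a) (hb : 0 ≤ b) (hH0 : 0 < H) (hH : H ≤ 1 / 2) (hg0 : g 0 = 0)
    (hgc : ContinuousOn g (Icc 0 T)) {t : ℝ} (ht : t ∈ Icc 0 T) :
    Tendsto (fun ε => ∫ s in (0)..t, drift H ε (Xe ε) s) (𝓝[>] 0)
      (𝓝 ((X t - X₀ + b * (∫ s in (0)..t, X s) - σ * g t) / a)) := by
  refine (((((hX t ht).sub_const X₀).add ((tendsto_integral_of_approxSol hsol hX ha.le hb hH0
    hH hg0 hgc ht).const_mul b)).sub_const (σ * g t)).div_const a).congr' ?_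
  filter_upwards [self_mem_nhdsWithin] with ε hε
  rw [(hsol ε hε).eq_drift ht]
  field_simp
  ring

theorem integral_rpow_div_le_of_tendsto (hsol : ∀ ε > 0, approxSol X₀ a b σ H g T ε (Xe ε))
    (hX : ∀ s ∈ Icc 0 T, Tendsto (fun ε => Xe ε s) (𝓝[>] 0) (𝓝 (X s))) {t I : ℝ}
    (ht : t ∈ Icc 0 T)
    (hI : Tendsto (fun ε => ∫ s in (0)..t, drift H ε (Xe ε) s) (𝓝[>] 0) (𝓝 I)) :
    ∫ s in (0)..t, s ^ (2 * H - 1) / X s ≤ I := by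
  set u : ℕ → ℝ := fun n => 1 / (n + 1)
  have hu_pos (n : ℕ) : 0 < u n := Nat.one_div_pos_of_nat
  have hu : Tendsto u atTop (𝓝[>] 0) := tendsto_nhdsWithin_iff.2
    ⟨tendsto_one_div_add_atTop_nhds_zero_nat, Eventually.of_forall hu_pos⟩
  have hsub : Icc 0 t ⊆ Icc 0 T := Icc_subset_Icc le_rfl ht.2
  simp only [intervalIntegral.integral_of_le ht.1] at hI ⊢
  refine integral_le_of_tendsto_integral_of_le_liminf
    (F := fun n => drift H (u n) (Xe (u n))) (fun n => ?_) (fun n => ?_) (hI.comp hu) ?_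
  · exact (continuousOn_drift ((hsol _ (hu_pos n)).1.mono hsub)
      (hsub.trans Icc_subset_Ici_self) (hu_pos n)).integrableOn_Icc.mono_set Ioc_subset_Icc_self
  · filter_upwards [ae_restrict_mem measurableSet_Ioc] with s hs
    exact drift_nonneg hs.1.le (hu_pos n)
  · filter_upwards [ae_restrict_mem measurableSet_Ioc] with s hs
    rcases le_or_gt (X s) 0 with hXs | hXs
    · rw [ENNReal.ofReal_of_nonpos (div_nonpos_of_nonneg_of_nonpos
        (Real.rpow_nonneg hs.1.le _) hXs)]
      exact bot_le
    · exact (ENNReal.tendsto_ofReal (tendsto_drift (tendsto_nhds_of_tendsto_nhdsWithin hu)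
        ((hX s (hsub (Ioc_subset_Icc_self hs))).comp hu) hs.1 hXs)).liminf_eq.ge

end limit

theorem limit_process_equation_with_L_general
    (X₀ a b σ H : ℝ) (ha : 0 < a) (hb : 0 ≤ b)
    (hH0 : 0 < H) (hH : H < 1/2)
    (g : ℝ → ℝ) (hgc : ContinuousOn g (Set.Ici 0)) (hg0 : g 0 = 0)
    (Xe : ℝ → ℝ → ℝ)
    (hXe : ∀ ε > (0:ℝ), ∀ T > (0:ℝ), approxSol X₀ a b σ H g T ε (Xe ε))
    (X : ℝ → ℝ)
    (hX : ∀ t ≥ (0:ℝ),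
      Tendsto (fun ε => Xe ε t) (nhdsWithin 0 (Set.Ioi 0)) (nhds (X t)))
    :
    ∀ t ≥ (0:ℝ),
      0 ≤ X t - X₀ - a * (∫ s in (0:ℝ)..t, s ^ (2 * H - 1) / X s)
        + b * (∫ s in (0:ℝ)..t, X s) - σ * g t := by
  intro t ht
  have hsol := fun ε hε => hXe ε hε (t + 1) (by linarith)
  have hXT : ∀ s ∈ Icc 0 (t + 1), Tendsto (fun ε => Xe ε s) (𝓝[>] 0) (𝓝 (X s)) :=
    fun s hs => hX s hs.1
  have htT : t ∈ Icc 0 (t + 1) := ⟨ht, by linarith⟩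
  have hJ := integral_rpow_div_le_of_tendsto hsol hXT htT
    (tendsto_integral_drift hsol hXT ha hb hH0 hH.le hg0 (hgc.mono Icc_subset_Ici_self) htT)
  rw [le_div_iff₀ ha] at hJ
  linarith

/-- **Corollary 3.4.** Defining
`L_t = X_t − X₀ − a∫₀ᵗ s^{2H-1}/X_s ds + b∫₀ᵗ X_s ds − σ g(t)`, one has `L_t ≥ 0`
for all `t ≥ 0`; equivalently `X_t = X₀ + a∫₀ᵗ s^{2H-1}/X_s ds − b∫₀ᵗ X_s ds
+ σ g(t) + L_t` with `L` nonnegative. -/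
theorem limit_process_equation_with_L
    (X₀ a b σ H : ℝ) (hX₀ : 0 < X₀) (ha : 0 < a) (hb : 0 ≤ b) (hσ : 0 < σ)
    (hH0 : 0 < H) (hH : H < 1/2)
    (g : ℝ → ℝ) (hgc : ContinuousOn g (Set.Ici 0)) (hg0 : g 0 = 0)
    (Xe : ℝ → ℝ → ℝ)
    (hXe : ∀ ε > (0:ℝ), ∀ T > (0:ℝ), approxSol X₀ a b σ H g T ε (Xe ε))
    (X : ℝ → ℝ)
    (hX : ∀ t ≥ (0:ℝ),
      Tendsto (fun ε => Xe ε t) (nhdsWithin 0 (Set.Ioi 0)) (nhds (X t)))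
    (β : ℝ) (hβ0 : 0 < β) (hβH : β < H)
    (hgH : ∀ T > (0:ℝ), ∃ C > (0:ℝ), ∀ s ∈ Set.Icc (0:ℝ) T, ∀ t ∈ Set.Icc (0:ℝ) T,
      |g t - g s| ≤ C * |t - s| ^ β)
    :
    ∀ t ≥ (0:ℝ),
      0 ≤ X t - X₀ - a * (∫ s in (0:ℝ)..t, s ^ (2 * H - 1) / X s)
        + b * (∫ s in (0:ℝ)..t, X s) - σ * g t :=
  limit_process_equation_with_L_general X₀ a b σ H ha hb hH0 hH g hgc hg0 Xe hXe X hX
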